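/- Let 0 < a < 6 and K = (x_1^9, x_2^5, x_3^7, x_1^6 x_2^2, x_1^a x_2^2 x_3) in k[x_1,x_2,x_3]. Then K is a table ideal if and only if a = 4, in which case K = K(T) for the (2,3)-table T (in variables ordered x_2, x_1, x_3) with rows (5, 9, 7), (3, 3, 0), (0, 2, 6). -/

import Mathlib

open MvPolynomial Finset

/-- An `(s,n)`-table: an `(s+1) × n` matrix of non-negative integers `α i j`
(rows `0..s`, columns `1..n`, with `d j := α 0 j`) satisfying the table axioms. -/
def IsTable (s n : ℕ) (α : ℕ → ℕ → ℕ) : Prop :=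
  s < n ∧
  (∀ i j, 1 ≤ i → i ≤ s → j < i → α i j = 0) ∧
  (∀ j, 1 ≤ j → j ≤ n → ∑ i ∈ Finset.Icc 1 s, α i j ≤ α 0 j) ∧
  (∀ k, 1 ≤ k → k ≤ s →
    α 0 k = ∑ i ∈ Finset.Icc 1 (k - 1), α i k + ∑ j ∈ Finset.Icc (k + 1) n, α k j
      + (if k + 1 ≤ s then α (k + 1) (k + 1) else 0))

/-- The generator `m_{i,j}` of `K(T)`, with columns `t` mapped to the variable `v t`:
`m_{i,j} = x_1^{d_1-α_{1,1}} ⋯ x_i^{d_i-α_{1,i}-⋯-α_{i,i}} · x_j^{d_j-α_{1,j}-⋯-α_{i,j}}`. -/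
noncomputable def mGenV (𝕜 : Type*) [Field 𝕜] (v : ℕ → ℕ) (α : ℕ → ℕ → ℕ) (i j : ℕ) :
    MvPolynomial ℕ 𝕜 :=
  (∏ t ∈ Finset.Icc 1 i, X (v t) ^ (α 0 t - ∑ r ∈ Finset.Icc 1 i, α r t)) *
    X (v j) ^ (α 0 j - ∑ r ∈ Finset.Icc 1 i, α r j)

/-- The generator `m_{i,j}` with the default variable order. -/
noncomputable def mGen (𝕜 : Type*) [Field 𝕜] (α : ℕ → ℕ → ℕ) (i j : ℕ) :
    MvPolynomial ℕ 𝕜 :=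
  mGenV 𝕜 id α i j

/-- The ideal `K(T)` associated to an `(s,n)`-table, generated by all `m_{i,j}`,
`0 ≤ i ≤ s`, `i < j ≤ n`, in `𝕜[x_1,…,x_n]` (viewed inside `MvPolynomial ℕ 𝕜`). -/
noncomputable def KIdeal (𝕜 : Type*) [Field 𝕜] (s n : ℕ) (α : ℕ → ℕ → ℕ) :
    Ideal (MvPolynomial ℕ 𝕜) :=
  Ideal.span {m | ∃ i j, i ≤ s ∧ i < j ∧ j ≤ n ∧ m = mGen 𝕜 α i j}

/-- A table is in normal form: nonzero diagonal entries, no unconstrained almost-zero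
columns, and strict column inequalities. -/
def NormalForm (s n : ℕ) (α : ℕ → ℕ → ℕ) : Prop :=
  (∀ i, 1 ≤ i → i ≤ s → α i i ≠ 0) ∧
  (1 ≤ s → ∀ j, s + 1 ≤ j → j ≤ n → ∃ i, 1 ≤ i ∧ i ≤ s ∧ α i j ≠ 0) ∧
  (∀ j, 1 ≤ j → j ≤ n → ∑ i ∈ Finset.Icc 1 s, α i j < α 0 j)

/-- A generalised table: a disjoint union of tables on disjoint sets of variables. -/
structure GenTable where
  num : ℕ
  s : Fin num → ℕ
  n : Fin num → ℕ
  α : Fin num → ℕ → ℕ → ℕ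
  var : Fin num → ℕ → ℕ
  var_inj : ∀ c c' j j', 1 ≤ j → j ≤ n c → 1 ≤ j' → j' ≤ n c' →
    var c j = var c' j' → c = c' ∧ j = j'
  table : ∀ c, IsTable (s c) (n c) (α c)

/-- The ideal associated to a generalised table: the sum of the ideals of the
individual tables. -/
noncomputable def gKIdeal (𝕜 : Type*) [Field 𝕜] (T : GenTable) :
    Ideal (MvPolynomial ℕ 𝕜) :=
  Ideal.span {m | ∃ c i j, i ≤ T.s c ∧ i < j ∧ j ≤ T.n c ∧
    m = mGenV 𝕜 (T.var c) (T.α c) i j}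

/-- A generalised table is in normal form iff each individual table is. -/
def gNormal (T : GenTable) : Prop := ∀ c, NormalForm (T.s c) (T.n c) (T.α c)

/-- The `(2,3)`-table with rows `(5, 9, 7)`, `(3, 3, 0)`, `(0, 2, 6)`. -/
def tau15 : ℕ → ℕ → ℕ
  | 0, 1 => 5 | 0, 2 => 9 | 0, 3 => 7
  | 1, 1 => 3 | 1, 2 => 3
  | 2, 2 => 2 | 2, 3 => 6
  | _, _ => 0

/-- Variable order `x_2, x_1, x_3`: column 1 ↦ variable 2, column 2 ↦ 1, column 3 ↦ 3. -/
def v15 : ℕ → ℕ := fun t => if t = 1 then 2 else if t = 2 then 1 else 3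

/-!
A monomial ideal has a unique minimal set of monomial generators, and for `a < 6` the five given
monomials are pairwise incomparable, so each of them is one of the generators `m_{i,j}` of the
table. Each `m_{0,j} = x_{v j}^{d_j}` is a multiple of one of the five, so all columns carry the
variables `x_1, x_2, x_3`; as `x_1^a x_2^2 x_3` involves three variables, it is `m_{2,3}` of a
single `(2,3)`-table. Then `x_1^6 x_2^2` is some `m_{1,j}`, and since `m_{1,j}` and `m_{2,3}` have
the same exponent at the first column, that column carries `x_2` with exponent `2`. The pure
powers are row-zero generators and determine the row `d`, after which the table equations for
`k = 1, 2` leave only `j = 2` and `a = 4`. Conversely, the table `tau15` produces the five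
monomials and the redundant `x_2^2 x_3^7`.
-/

theorem IsAntichain.subset_of_forall_exists_le {α : Type*} [PartialOrder α] {S G : Set α}
    (hG : IsAntichain (· ≤ ·) G) (hSG : ∀ s ∈ S, ∃ g ∈ G, g ≤ s)
    (hGS : ∀ g ∈ G, ∃ s ∈ S, s ≤ g) : G ⊆ S := by
  intro g hg
  obtain ⟨s, hs, hsg⟩ := hGS g hg
  obtain ⟨g', hg', hg's⟩ := hSG s hs
  obtain rfl : g' = g := hG.eq hg' hg (hg's.trans hsg)
  rwa [← le_antisymm hsg hg's]

namespace MvPolynomial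

variable {σ R : Type*} [CommSemiring R]

theorem span_monomial_image_le_iff [Nontrivial R] {S G : Set (σ →₀ ℕ)} :
    Ideal.span ((fun s => monomial s (1 : R)) '' S) ≤
        Ideal.span ((fun s => monomial s (1 : R)) '' G) ↔ ∀ s ∈ S, ∃ g ∈ G, g ≤ s := by
  classical
  rw [Ideal.span_le, Set.image_subset_iff]
  refine forall₂_congr fun s _ => ?_
  rw [Set.mem_preimage, SetLike.mem_coe, mem_ideal_span_monomial_image, support_monomial,
    if_neg one_ne_zero]
  simp

theorem span_monomial_image_eq_iff [Nontrivial R] {S G : Set (σ →₀ ℕ)} :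
    Ideal.span ((fun s => monomial s (1 : R)) '' S) =
        Ideal.span ((fun s => monomial s (1 : R)) '' G) ↔
      (∀ s ∈ S, ∃ g ∈ G, g ≤ s) ∧ ∀ g ∈ G, ∃ s ∈ S, s ≤ g := by
  rw [le_antisymm_iff, span_monomial_image_le_iff, span_monomial_image_le_iff]

theorem span_monomial_image_insert_of_le {G : Set (σ →₀ ℕ)} {u g : σ →₀ ℕ} (hg : g ∈ G)
    (hgu : g ≤ u) :
    Ideal.span ((fun s => monomial s (1 : R)) '' insert u G) =
      Ideal.span ((fun s => monomial s (1 : R)) '' G) := by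
  classical
  rw [Set.image_insert_eq, Ideal.span_insert, sup_eq_right, Ideal.span_singleton_le_iff_mem,
    mem_ideal_span_monomial_image]
  intro xi hxi
  obtain rfl := Finset.mem_singleton.1 (support_monomial_subset hxi)
  exact ⟨g, hg, hgu⟩

end MvPolynomial

section Generators

open Finsupp (single)

variable (v : ℕ → ℕ) (α : ℕ → ℕ → ℕ)

def colExp (i t : ℕ) : ℕ := α 0 t - ∑ r ∈ Icc 1 i, α r t

noncomputable def mExp (i j : ℕ) : ℕ →₀ ℕ :=
  ∑ t ∈ Icc 1 i, single (v t) (colExp α i t) + single (v j) (colExp α i j)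

def mExps (s n : ℕ) : Set (ℕ →₀ ℕ) :=
  {u | ∃ i j, i ≤ s ∧ i < j ∧ j ≤ n ∧ u = mExp v α i j}

theorem mGenV_eq_monomial (𝕜 : Type*) [Field 𝕜] (i j : ℕ) :
    mGenV 𝕜 v α i j = monomial (mExp v α i j) 1 := by
  simp only [mGenV, mExp, colExp, X_pow_eq_monomial, ← monomial_sum_one, monomial_mul, one_mul]

theorem span_mGenV_eq (𝕜 : Type*) [Field 𝕜] (s n : ℕ) :
    Ideal.span {m | ∃ i j, i ≤ s ∧ i < j ∧ j ≤ n ∧ m = mGenV 𝕜 v α i j} =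
      Ideal.span ((fun u => monomial u (1 : 𝕜)) '' mExps v α s n) := by
  congr 1
  ext m
  simp [mExps, mGenV_eq_monomial, eq_comm, and_assoc]

theorem gKIdeal_eq_span (𝕜 : Type*) [Field 𝕜] (T : GenTable) :
    gKIdeal 𝕜 T = Ideal.span ((fun u => monomial u (1 : 𝕜)) ''
      ⋃ c, mExps (T.var c) (T.α c) (T.s c) (T.n c)) := by
  unfold gKIdeal
  congr 1
  ext m
  simp [mExps, mGenV_eq_monomial, eq_comm, and_assoc]

theorem mExp_zero (j : ℕ) : mExp v α 0 j = single (v j) (α 0 j) := by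
  simp [mExp, colExp]

theorem colExp_one (t : ℕ) : colExp α 1 t = α 0 t - α 1 t := by
  simp [colExp]

theorem colExp_two (t : ℕ) : colExp α 2 t = α 0 t - (α 1 t + α 2 t) := by
  simp [colExp, Finset.sum_Icc_succ_top]

variable {v}

theorem mExp_apply_of_injOn {n i j t : ℕ} (hv : Set.InjOn v (Set.Icc 1 n)) (hij : i < j)
    (hjn : j ≤ n) (ht : t ∈ Set.Icc 1 n) :
    mExp v α i j (v t) = if t ≤ i ∨ t = j then colExp α i t else 0 := by
  classical
  have single_apply_v : ∀ t' ∈ Set.Icc 1 n, ∀ e, single (v t') e (v t) = if t' = t then e else 0 :=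
    fun t' ht' e => by rw [Finsupp.single_apply]; exact if_congr (hv.eq_iff ht' ht) rfl rfl
  rw [mExp, Finsupp.add_apply, Finsupp.finsetSum_apply, single_apply_v j ⟨by omega, hjn⟩,
    Finset.sum_congr rfl fun t' ht' =>
      single_apply_v t' (by simp only [Finset.mem_Icc] at ht'; exact ⟨ht'.1, by omega⟩) _,
    Finset.sum_ite_eq']
  obtain ⟨ht1, -⟩ := ht
  rcases eq_or_ne j t with rfl | hjt
  · simp [show ¬j ≤ i by omega]
  · simp [hjt, hjt.symm, ht1]

theorem card_support_mExp_le (i j : ℕ) : (mExp v α i j).support.card ≤ i + 1 := by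
  classical
  have hsupp : (mExp v α i j).support ⊆ (insert j (Icc 1 i)).image v := by
    refine Finsupp.support_add.trans
      (Finset.union_subset (Finsupp.support_finsetSum.trans ?_) ?_)
    · exact Finset.biUnion_subset.2 fun t ht => Finsupp.support_single_subset.trans
        (Finset.singleton_subset_iff.2 (Finset.mem_image_of_mem v (Finset.mem_insert_of_mem ht)))
    · exact Finsupp.support_single_subset.trans (by simp)
  calc (mExp v α i j).support.card ≤ ((insert j (Icc 1 i)).image v).card := card_le_card hsupp
    _ ≤ (insert j (Icc 1 i)).card := card_image_le
    _ ≤ (Icc 1 i).card + 1 := card_insert_le _ _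
    _ = i + 1 := by simp

end Generators

namespace GenTable

variable (T : GenTable)

theorem injOn_var (c : Fin T.num) : Set.InjOn (T.var c) (Set.Icc 1 (T.n c)) :=
  fun _ ht _ ht' h => (T.var_inj c c _ _ ht.1 ht.2 ht'.1 ht'.2 h).2

theorem one_le_n (c : Fin T.num) : 1 ≤ T.n c := by
  have := (T.table c).1
  omega

variable {T} {S : Finset ℕ}

theorem var_mem_of_forall_exists_le {G : Set (ℕ →₀ ℕ)} (hG : ∀ g ∈ G, ∃ x ∈ S, g x ≠ 0)
    (hle : ∀ u ∈ ⋃ c, mExps (T.var c) (T.α c) (T.s c) (T.n c), ∃ g ∈ G, g ≤ u)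
    (c : Fin T.num) (j : ℕ) (hj1 : 1 ≤ j) (hjn : j ≤ T.n c) : T.var c j ∈ S := by
  obtain ⟨g, hg, hgu⟩ := hle _ (Set.mem_iUnion.2 ⟨c, 0, j, Nat.zero_le _, hj1, hjn, rfl⟩)
  obtain ⟨x, hxS, hgx⟩ := hG g hg
  have hx := Finsupp.le_def.1 hgu x
  rw [mExp_zero, Finsupp.single_apply] at hx
  split_ifs at hx with hvx
  · exact hvx ▸ hxS
  · omega

theorem n_le_card (hS : ∀ c j, 1 ≤ j → j ≤ T.n c → T.var c j ∈ S) (c : Fin T.num) :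
    T.n c ≤ S.card := by
  simpa using Finset.card_le_card_of_injOn (T.var c) (fun j hj => hS c j
    (Finset.mem_Icc.1 hj).1 (Finset.mem_Icc.1 hj).2) (by simpa using T.injOn_var c)

theorem eq_of_card_le_n (hS : ∀ c j, 1 ≤ j → j ≤ T.n c → T.var c j ∈ S) {c : Fin T.num}
    (hc : S.card ≤ T.n c) (c' : Fin T.num) : c' = c := by
  classical
  have himage : (Icc 1 (T.n c)).image (T.var c) = S := by
    refine Finset.eq_of_subset_of_card_le (fun x hx => ?_) ?_
    · obtain ⟨j, hj, rfl⟩ := Finset.mem_image.1 hx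
      exact hS c j (Finset.mem_Icc.1 hj).1 (Finset.mem_Icc.1 hj).2
    · rw [Finset.card_image_of_injOn (by simpa using T.injOn_var c)]
      simpa using hc
  obtain ⟨t, ht, hvt⟩ := Finset.mem_image.1 (himage ▸ hS c' 1 le_rfl (T.one_le_n c'))
  exact (T.var_inj c' c 1 t le_rfl (T.one_le_n c') (Finset.mem_Icc.1 ht).1
    (Finset.mem_Icc.1 ht).2 hvt.symm).1

end GenTable

open Finsupp (single)

def kExps (a : ℕ) : Set (ℕ →₀ ℕ) :=
  {single 1 9, single 2 5, single 3 7, single 1 6 + single 2 2,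
    single 1 a + single 2 2 + single 3 1}

theorem kGens_eq_image (𝕜 : Type*) [Field 𝕜] (a : ℕ) :
    ({X 1 ^ 9, X 2 ^ 5, X 3 ^ 7, X 1 ^ 6 * X 2 ^ 2, X 1 ^ a * X 2 ^ 2 * X 3} :
      Set (MvPolynomial ℕ 𝕜)) = (fun u => monomial u (1 : 𝕜)) '' kExps a := by
  simp only [kExps, Set.image_insert_eq, Set.image_singleton, X_pow_eq_monomial]
  simp only [X, monomial_mul, mul_one]

theorem isAntichain_kExps {a : ℕ} (ha : a < 6) : IsAntichain (· ≤ ·) (kExps a) := by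
  intro g hg g' hg' hne hle
  have h1 := Finsupp.le_def.1 hle 1
  have h2 := Finsupp.le_def.1 hle 2
  have h3 := Finsupp.le_def.1 hle 3
  simp only [kExps, Set.mem_insert_iff, Set.mem_singleton_iff] at hg hg'
  rcases hg with rfl | rfl | rfl | rfl | rfl <;> rcases hg' with rfl | rfl | rfl | rfl | rfl <;>
    simp at hne h1 h2 h3 <;> omega

theorem exists_apply_ne_zero_of_mem_kExps {a : ℕ} :
    ∀ g ∈ kExps a, ∃ x ∈ ({1, 2, 3} : Finset ℕ), g x ≠ 0 := by
  simp only [kExps, Set.mem_insert_iff, Set.mem_singleton_iff]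
  rintro g (rfl | rfl | rfl | rfl | rfl)
  exacts [⟨1, by simp⟩, ⟨2, by simp⟩, ⟨3, by simp⟩, ⟨2, by simp⟩, ⟨2, by simp⟩]

section Table23

variable {a : ℕ} {v : ℕ → ℕ} {α : ℕ → ℕ → ℕ}

theorem exists_mExp_one_eq (hK : kExps a ⊆ mExps v α 2 3)
    (h5 : mExp v α 2 3 = single 1 a + single 2 2 + single 3 1) :
    ∃ j, (j = 2 ∨ j = 3) ∧ mExp v α 1 j = single 1 6 + single 2 2 := by
  obtain ⟨i, j, hi, hij, hj, h⟩ := hK (by simp [kExps] : single 1 6 + single 2 2 ∈ kExps a)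
  interval_cases i
  · rw [mExp_zero] at h
    have h1 := DFunLike.congr_fun h 1
    have h2 := DFunLike.congr_fun h 2
    simp [Finsupp.single_apply] at h1 h2
    split_ifs at h1 h2
    omega
  · exact ⟨j, by omega, h.symm⟩
  · obtain rfl : j = 3 := by omega
    simpa using DFunLike.congr_fun (h.trans h5) 3

theorem v_one_eq_two_of_mExp_eq {j : ℕ} (ha : a < 6) (hα21 : α 2 1 = 0)
    (hinj : Set.InjOn v (Set.Icc 1 3)) (hv1 : v 1 ∈ ({1, 2, 3} : Finset ℕ)) (hj : j = 2 ∨ j = 3)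
    (h4 : mExp v α 1 j = single 1 6 + single 2 2)
    (h5 : mExp v α 2 3 = single 1 a + single 2 2 + single 3 1) : v 1 = 2 := by
  have h45 : (single 1 6 + single 2 2 : ℕ →₀ ℕ) (v 1) =
      (single 1 a + single 2 2 + single 3 1 : ℕ →₀ ℕ) (v 1) := by
    rw [← h4, ← h5, mExp_apply_of_injOn α hinj (by omega) (by omega) ⟨le_rfl, by norm_num⟩,
      mExp_apply_of_injOn α hinj (by norm_num) le_rfl ⟨le_rfl, by norm_num⟩]
    simp [colExp_one, colExp_two, hα21]
  simp only [Finset.mem_insert, Finset.mem_singleton] at hv1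
  rcases hv1 with h | h | h <;> simp [h] at h45 ⊢
  omega

-- Generators of level `1` and `2` have exponent `colExp α 1 1` at the first column's variable.
theorem exists_col_of_single_mem_mExps {y e : ℕ} (hinj : Set.InjOn v (Set.Icc 1 3))
    (hα21 : α 2 1 = 0) (h : single y e ∈ mExps v α 2 3) (he0 : e ≠ 0)
    (he : single y e (v 1) ≠ colExp α 1 1) : ∃ j ∈ Set.Icc 1 3, v j = y ∧ α 0 j = e := by
  obtain ⟨i, j, hi, hij, hj, h⟩ := h
  interval_cases i
  · rw [mExp_zero, Finsupp.single_eq_single_iff] at h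
    exact ⟨j, ⟨hij, hj⟩, by omega⟩
  all_goals
    rw [h, mExp_apply_of_injOn α hinj hij hj ⟨le_rfl, by norm_num⟩] at he
    simp [colExp_one, colExp_two, hα21] at he

theorem eq_four_of_kExps_subset_mExps (ha : a < 6) (hα : IsTable 2 3 α)
    (hinj : Set.InjOn v (Set.Icc 1 3)) (hv : ∀ t ∈ Set.Icc 1 3, v t ∈ ({1, 2, 3} : Finset ℕ))
    (hK : kExps a ⊆ mExps v α 2 3) (h5 : mExp v α 2 3 = single 1 a + single 2 2 + single 3 1) :
    a = 4 := by
  have hα21 : α 2 1 = 0 := hα.2.1 2 1 (by norm_num) le_rfl (by norm_num)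
  have hd1 : α 0 1 = α 1 2 + α 1 3 + α 2 2 := by
    simpa [Finset.sum_Icc_succ_top] using hα.2.2.2 1 le_rfl (by norm_num)
  have hd2 : α 0 2 = α 1 2 + α 2 3 := by simpa using hα.2.2.2 2 (by norm_num) le_rfl
  have ev : ∀ {i j t}, i < j → j ≤ 3 → t ∈ Set.Icc 1 3 →
      mExp v α i j (v t) = if t ≤ i ∨ t = j then colExp α i t else 0 :=
    mExp_apply_of_injOn α hinj
  obtain ⟨j4, hj4, h4⟩ := exists_mExp_one_eq hK h5
  have hv1 := v_one_eq_two_of_mExp_eq ha hα21 hinj (hv 1 ⟨le_rfl, by norm_num⟩) hj4 h4 h5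
  have hc1 : colExp α 1 1 = 2 := by
    have := DFunLike.congr_fun h4 (v 1)
    rw [ev (by omega) (by omega) ⟨le_rfl, by norm_num⟩, hv1] at this
    simpa using this
  have pure := fun y e (hy : single y e ∈ kExps a) (he0 : e ≠ 0) (he : single y e 2 ≠ 2) =>
    exists_col_of_single_mem_mExps hinj hα21 (hK hy) he0 (by rwa [hv1, hc1])
  obtain ⟨j1, hj1, hvj1, hdj1⟩ := pure 1 9 (by simp [kExps]) (by norm_num) (by simp)
  obtain ⟨j2, hj2, hvj2, hdj2⟩ := pure 2 5 (by simp [kExps]) (by norm_num) (by simp)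
  obtain ⟨j3, hj3, hvj3, hdj3⟩ := pure 3 7 (by simp [kExps]) (by norm_num) (by simp)
  obtain rfl : j2 = 1 := hinj hj2 ⟨le_rfl, by norm_num⟩ (hvj2.trans hv1.symm)
  obtain ⟨k, hk⟩ : ∃ k, j4 = 2 ∧ k = 3 ∨ j4 = 3 ∧ k = 2 := by
    rcases hj4 with rfl | rfl <;> simp
  have hvk : v k = 3 := by
    have h0 := DFunLike.congr_fun h4 (v k)
    rw [ev (by omega) (by omega) ⟨by omega, by omega⟩, if_neg (by omega)] at h0
    have hk1 := hinj.ne ⟨by omega, by omega⟩ ⟨le_rfl, by norm_num⟩ (by omega : k ≠ 1)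
    have := hv k ⟨by omega, by omega⟩
    simp only [Finset.mem_insert, Finset.mem_singleton] at this
    rcases this with h | h | h <;> simp [h, hv1] at h0 hk1 ⊢
  have hvj4 : v j4 = 1 := by
    have hj41 := hinj.ne ⟨by omega, by omega⟩ ⟨le_rfl, by norm_num⟩ (by omega : j4 ≠ 1)
    have hj4k := hinj.ne ⟨by omega, by omega⟩ ⟨by omega, by omega⟩ (by omega : j4 ≠ k)
    have := hv j4 ⟨by omega, by omega⟩
    simp only [Finset.mem_insert, Finset.mem_singleton] at this
    rcases this with h | h | h <;> simp [h, hv1, hvk] at hj41 hj4k ⊢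
  obtain rfl : j1 = j4 := hinj hj1 ⟨by omega, by omega⟩ (hvj1.trans hvj4.symm)
  obtain rfl : j3 = k := hinj hj3 ⟨by omega, by omega⟩ (hvj3.trans hvk.symm)
  have h6 := DFunLike.congr_fun h4 (v j1)
  rw [ev (by omega) (by omega) hj1, if_pos (Or.inr rfl), hvj1] at h6
  have h5a := DFunLike.congr_fun h5 (v j1)
  rw [ev (by norm_num) le_rfl hj1, if_pos (by omega), hvj1] at h5a
  have h5c := DFunLike.congr_fun h5 (v j3)
  rw [ev (by norm_num) le_rfl hj3, if_pos (by omega), hvk] at h5c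
  simp [colExp_one, colExp_two] at h6 h5a h5c
  rcases hk with ⟨rfl, rfl⟩ | ⟨rfl, rfl⟩ <;> omega

end Table23

theorem eq_four_of_gKIdeal_eq (𝕜 : Type*) [Field 𝕜] {a : ℕ} (ha1 : 0 < a) (ha2 : a < 6)
    (T : GenTable) (hT : gKIdeal 𝕜 T = Ideal.span ((fun u => monomial u (1 : 𝕜)) '' kExps a)) :
    a = 4 := by
  rw [gKIdeal_eq_span, MvPolynomial.span_monomial_image_eq_iff] at hT
  obtain ⟨hle, hge⟩ := hT
  have hK := (isAntichain_kExps ha2).subset_of_forall_exists_le hle hge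
  have hvar := GenTable.var_mem_of_forall_exists_le exists_apply_ne_zero_of_mem_kExps hle
  obtain ⟨c, i, j, hi, hij, hj, h5⟩ :=
    Set.mem_iUnion.1 (hK (by simp [kExps] : single 1 a + single 2 2 + single 3 1 ∈ kExps a))
  have hi2 : 2 ≤ i := by
    have hsupp : ({1, 2, 3} : Finset ℕ) ⊆ (mExp (T.var c) (T.α c) i j).support := by
      intro x hx
      simp only [Finset.mem_insert, Finset.mem_singleton] at hx
      rcases hx with rfl | rfl | rfl <;> simp [← h5, ha1.ne']
    have := (Finset.card_le_card hsupp).trans (card_support_mExp_le _ i j)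
    simp at this
    omega
  have hn : T.n c ≤ 3 := T.n_le_card hvar c
  have hs : T.s c < T.n c := (T.table c).1
  obtain ⟨rfl, rfl, hn3, hs2⟩ : i = 2 ∧ j = 3 ∧ T.n c = 3 ∧ T.s c = 2 := by omega
  have hone : ∀ c', c' = c := T.eq_of_card_le_n hvar (by simp [hn3])
  refine eq_four_of_kExps_subset_mExps ha2 (hs2 ▸ hn3 ▸ T.table c) (hn3 ▸ T.injOn_var c)
    (fun t ht => hvar c t ht.1 (hn3 ▸ ht.2)) (fun g hg => ?_) h5.symm
  obtain ⟨c', hc'⟩ := Set.mem_iUnion.1 (hK hg)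
  rwa [hone c', hs2, hn3] at hc'

theorem isTable_tau15 : IsTable 2 3 tau15 := by
  refine ⟨by norm_num, ?_, ?_, ?_⟩
  · intro i j h1 h2 h3
    interval_cases i <;> interval_cases j <;> rfl
  · intro j h1 h2
    interval_cases j <;> decide
  · intro k h1 h2
    interval_cases k <;> decide

def T15 : GenTable where
  num := 1
  s := fun _ => 2
  n := fun _ => 3
  α := fun _ => tau15
  var := fun _ => v15
  var_inj := by
    intro c c' j j' h1 h2 h3 h4 h5
    refine ⟨Subsingleton.elim c c', ?_⟩
    interval_cases j <;> interval_cases j' <;> simp_all [v15]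
  table := fun _ => isTable_tau15

theorem mExps_tau15 :
    mExps v15 tau15 2 3 = insert (single 2 2 + single 3 7) (kExps 4) := by
  have e12 : mExp v15 tau15 1 2 = single 1 6 + single 2 2 := by
    ext x
    simp [mExp, colExp, v15, tau15, Finsupp.single_apply]
    split_ifs <;> omega
  have e13 : mExp v15 tau15 1 3 = single 2 2 + single 3 7 := by
    ext x
    simp [mExp, colExp, v15, tau15, Finsupp.single_apply]
    split_ifs <;> omega
  have e23 : mExp v15 tau15 2 3 = single 1 4 + single 2 2 + single 3 1 := by
    ext x
    simp [mExp, colExp, v15, tau15, Finset.sum_Icc_succ_top, Finsupp.single_apply]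
    split_ifs <;> omega
  ext u
  simp only [mExps, kExps, Set.mem_ofPred_eq, Set.mem_insert_iff, Set.mem_singleton_iff]
  constructor
  · rintro ⟨i, j, hi, hij, hj, rfl⟩
    interval_cases i <;> interval_cases j <;> simp [mExp_zero, v15, tau15, e12, e13, e23]
  · rintro (rfl | rfl | rfl | rfl | rfl | rfl)
    exacts [⟨1, 3, by norm_num, by norm_num, le_rfl, e13.symm⟩,
      ⟨0, 2, by norm_num, by norm_num, by norm_num, by simp [mExp_zero, v15, tau15]⟩,
      ⟨0, 1, by norm_num, by norm_num, by norm_num, by simp [mExp_zero, v15, tau15]⟩,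
      ⟨0, 3, by norm_num, by norm_num, le_rfl, by simp [mExp_zero, v15, tau15]⟩,
      ⟨1, 2, by norm_num, by norm_num, by norm_num, e12.symm⟩,
      ⟨2, 3, le_rfl, by norm_num, le_rfl, e23.symm⟩]

theorem span_mExps_tau15 (𝕜 : Type*) [Field 𝕜] :
    Ideal.span ((fun u => monomial u (1 : 𝕜)) '' mExps v15 tau15 2 3) =
      Ideal.span ((fun u => monomial u (1 : 𝕜)) '' kExps 4) := by
  rw [mExps_tau15]
  exact MvPolynomial.span_monomial_image_insert_of_le (by simp [kExps]) le_add_self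

theorem gKIdeal_T15 (𝕜 : Type*) [Field 𝕜] :
    gKIdeal 𝕜 T15 = Ideal.span ((fun u => monomial u (1 : 𝕜)) '' kExps 4) := by
  rw [gKIdeal_eq_span, ← span_mExps_tau15]
  exact congrArg _ (congrArg _ (Set.iUnion_const (ι := Fin 1) (mExps v15 tau15 2 3)))

/-- for `0 < a < 6`, the ideal
`K = (x_1^9, x_2^5, x_3^7, x_1^6 x_2^2, x_1^a x_2^2 x_3)` is a table ideal iff
`a = 4`, in which case `K = K(T)` for the `(2,3)`-table `tau15` in the variable
order `x_2, x_1, x_3`. -/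
theorem stmt15 (𝕜 : Type*) [Field 𝕜] (a : ℕ) (ha1 : 0 < a) (ha2 : a < 6) :
    ((∃ T : GenTable, gKIdeal 𝕜 T =
        Ideal.span ({X 1 ^ 9, X 2 ^ 5, X 3 ^ 7, X 1 ^ 6 * X 2 ^ 2,
          X 1 ^ a * X 2 ^ 2 * X 3} : Set (MvPolynomial ℕ 𝕜))) ↔ a = 4) ∧
    (a = 4 → IsTable 2 3 tau15 ∧
      Ideal.span ({X 1 ^ 9, X 2 ^ 5, X 3 ^ 7, X 1 ^ 6 * X 2 ^ 2,
          X 1 ^ a * X 2 ^ 2 * X 3} : Set (MvPolynomial ℕ 𝕜)) =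
        Ideal.span {m | ∃ i j, i ≤ 2 ∧ i < j ∧ j ≤ 3 ∧ m = mGenV 𝕜 v15 tau15 i j}) := by
  rw [kGens_eq_image]
  refine ⟨⟨fun ⟨T, hT⟩ => eq_four_of_gKIdeal_eq 𝕜 ha1 ha2 T hT, ?_⟩, ?_⟩
  · rintro rfl
    exact ⟨T15, gKIdeal_T15 𝕜⟩
  · rintro rfl
    exact ⟨isTable_tau15, by rw [span_mGenV_eq, span_mExps_tau15]⟩
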